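/- Let D_1, D_2 be corner perfect matchings of a non-degenerate dimer model whose height changes are adjacent vertices of the characteristic polygon in counter-clockwise order. Then for any perfect matching D_3 whose height change is not on the line segment joining h(D_1) and h(D_2), the intersection pairing satisfies ⟨[D_1 △ D_2], [D_2 △ D_3]⟩ > 0 in H_1(T;Z). -/
import Mathlib


open Finset

/-! ### Basic lattice geometry in `ℤ² ≅ H₁(T;ℤ)` -/

/-- The determinant pairing on `ℤ²`, realising the intersection pairing on `H₁(T;ℤ)`. -/
def zdet (v w : ℤ × ℤ) : ℤ := v.1 * w.2 - v.2 * w.1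

/-- Rotation by 90° counterclockwise. -/
def rot (v : ℤ × ℤ) : ℤ × ℤ := (-v.2, v.1)

/-- Rotation by 90° clockwise (used for Poincaré duality `H₁ ≅ H¹`). -/
def rotcw (v : ℤ × ℤ) : ℤ × ℤ := (v.2, -v.1)

/-- The embedding `ℤ² ↪ ℝ²`. -/
def toR (v : ℤ × ℤ) : ℝ × ℝ := ((v.1 : ℝ), (v.2 : ℝ))

/-- A lattice vector is primitive if its coordinates are coprime. -/
def IsPrimitive (v : ℤ × ℤ) : Prop := Int.gcd v.1 v.2 = 1

/-- A combinatorial model of a dimer model on the two-torus `T = ℝ²/ℤ²`: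
a finite bicolored bipartite graph (sets of black nodes `B`, white nodes `W`, and
edges `E`, each edge joining the black node `black e` to the white node `white e`),
together with the set `F` of faces of the embedding (`src e`/`tgt e` are the two faces
adjacent to the edge `e`, which are the source and target of the dual quiver arrow),
and the function `cls` recording the homology class in `H₁(T;ℤ) ≅ ℤ²` of any `1`-chain
`∑ c(e)·e` supported on the edges (each edge oriented so that `∂e = white e - black e`);
`cls` is only geometrically meaningful on `1`-cycles, and is additive. -/
structure DimerModel where
  B : Type
  W : Type
  E : Type
  F : Type
  [fintypeB : Fintype B]
  [fintypeW : Fintype W]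
  [fintypeE : Fintype E]
  [fintypeF : Fintype F]
  [deqB : DecidableEq B]
  [deqW : DecidableEq W]
  [deqE : DecidableEq E]
  [deqF : DecidableEq F]
  black : E → B
  white : E → W
  src : E → F
  tgt : E → F
  cls : (E → ℤ) → ℤ × ℤ
  cls_add : ∀ c₁ c₂ : E → ℤ, cls (c₁ + c₂) = cls c₁ + cls c₂

attribute [instance] DimerModel.fintypeB DimerModel.fintypeW DimerModel.fintypeE
  DimerModel.fintypeF DimerModel.deqB DimerModel.deqW DimerModel.deqE DimerModel.deqF

namespace DimerModel

variable (G : DimerModel)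

/-- A perfect matching: a set of edges covering each node exactly once. -/
def IsMatching (D : Finset G.E) : Prop :=
  (∀ b : G.B, ∃! e, e ∈ D ∧ G.black e = b) ∧
  (∀ w : G.W, ∃! e, e ∈ D ∧ G.white e = w)

/-- A dimer model is non-degenerate if every edge lies in some perfect matching. -/
def NonDegenerate : Prop := ∀ e : G.E, ∃ D : Finset G.E, G.IsMatching D ∧ e ∈ D

/-- The oriented `1`-chain `D₁ - D₂` supported on the symmetric difference. -/
def chain (D₁ D₂ : Finset G.E) : G.E → ℤ :=
  fun e => (if e ∈ D₁ then 1 else 0) - (if e ∈ D₂ then 1 else 0)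

/-- The homology class `[D₁ △ D₂] ∈ H₁(T;ℤ)` of the (oriented) symmetric difference. -/
def relClass (D₁ D₂ : Finset G.E) : ℤ × ℤ := G.cls (G.chain D₁ D₂)

/-- The homology class of the part of the `1`-cycle `D₁ - D₂` supported on `S`
(e.g. on a connected component of the symmetric difference). -/
def compClass (D₁ D₂ S : Finset G.E) : ℤ × ℤ :=
  G.cls (fun e => if e ∈ S then G.chain D₁ D₂ e else 0)

/-- The height change of `D` with respect to the reference matching `D₀`:
the Poincaré dual of `[D △ D₀]`. -/
def height (D₀ D : Finset G.E) : ℤ × ℤ := rotcw (G.relClass D D₀)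

/-- The characteristic polygon: the convex hull of the height changes of all
perfect matchings (with respect to the reference matching `D₀`). -/
def charPolygon (D₀ : Finset G.E) : Set (ℝ × ℝ) :=
  convexHull ℝ (toR '' (G.height D₀ '' {D | G.IsMatching D}))

/-- A corner perfect matching: its height change is a vertex (extreme point)
of the characteristic polygon. -/
def IsCorner (D₀ D : Finset G.E) : Prop :=
  G.IsMatching D ∧ toR (G.height D₀ D) ∈ (G.charPolygon D₀).extremePoints ℝ

/-- A multiplicity-free perfect matching: no other perfect matching has the same
height change. -/
def MultiplicityFree (D₀ D : Finset G.E) : Prop :=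
  G.IsMatching D ∧
    ∀ D' : Finset G.E, G.IsMatching D' → G.height D₀ D' = G.height D₀ D → D' = D

/-- Two (distinct) edges are adjacent if they share a node. -/
def Adj (e e' : G.E) : Prop :=
  e ≠ e' ∧ (G.black e = G.black e' ∨ G.white e = G.white e')

/-- `S` is a connected component of the edge set `X`. -/
def IsComponent (X S : Finset G.E) : Prop :=
  S.Nonempty ∧ S ⊆ X ∧
  (∀ e ∈ S, ∀ e' ∈ X, G.Adj e e' → e' ∈ S) ∧
  (∀ e ∈ S, ∀ e' ∈ S,
    Relation.ReflTransGen (fun a b => a ∈ S ∧ b ∈ S ∧ G.Adj a b) e e')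

/-- `D₁` and `D₂` are corner perfect matchings whose height changes are adjacent
vertices of the characteristic polygon, in counter-clockwise order: every height
change lies (weakly) on the left of the directed edge from `h(D₁)` to `h(D₂)`. -/
def AdjacentCornersCCW (D₀ D₁ D₂ : Finset G.E) : Prop :=
  G.IsCorner D₀ D₁ ∧ G.IsCorner D₀ D₂ ∧ G.height D₀ D₁ ≠ G.height D₀ D₂ ∧
  ∀ D : Finset G.E, G.IsMatching D →
    0 ≤ zdet (G.height D₀ D₂ - G.height D₀ D₁) (G.height D₀ D - G.height D₀ D₁)

end DimerModel

/-! ### Auxiliary lemmas -/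

lemma toR_inj : Function.Injective toR := by
  intro a b h
  simp only [toR, Prod.ext_iff] at h
  exact Prod.ext (by exact_mod_cast h.1) (by exact_mod_cast h.2)

lemma toR_sub (a b : ℤ × ℤ) : toR (a - b) = toR a - toR b := by
  simp [toR, Prod.ext_iff]

lemma DimerModel.cls_zero (G : DimerModel) : G.cls 0 = 0 := by
  have h := G.cls_add 0 0
  rw [add_zero] at h
  exact left_eq_add.mp h

lemma DimerModel.cls_neg (G : DimerModel) (c : G.E → ℤ) : G.cls (-c) = -G.cls c := by
  have h := G.cls_add c (-c)
  rw [add_neg_cancel, G.cls_zero] at h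
  exact (neg_eq_of_add_eq_zero_right h.symm).symm

lemma DimerModel.relClass_split (G : DimerModel) (D₀ D₁ D₂ : Finset G.E) :
    G.relClass D₁ D₂ = G.relClass D₁ D₀ - G.relClass D₂ D₀ := by
  have hc : G.chain D₁ D₂ = G.chain D₁ D₀ + -(G.chain D₂ D₀) := by
    funext e
    simp only [DimerModel.chain, Pi.add_apply, Pi.neg_apply]
    ring
  rw [DimerModel.relClass, hc, G.cls_add, G.cls_neg, sub_eq_add_neg,
    DimerModel.relClass, DimerModel.relClass]

lemma DimerModel.rot_height (G : DimerModel) (D₀ D : Finset G.E) :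
    rot (G.height D₀ D) = G.relClass D D₀ := by
  simp [DimerModel.height, rot, rotcw]

lemma zdet_collinear {u w : ℤ × ℤ} (hu : u ≠ 0) (h : zdet u w = 0) :
    ∃ t : ℝ, toR w = t • toR u := by
  simp only [zdet, sub_eq_zero] at h
  rcases eq_or_ne u.1 0 with h1 | h1
  · have h2 : u.2 ≠ 0 := fun h2 => hu (Prod.ext h1 h2)
    refine ⟨(w.2 : ℝ) / (u.2 : ℝ), ?_⟩
    have h2' : (u.2 : ℝ) ≠ 0 := Int.cast_ne_zero.mpr h2
    have hw1 : w.1 * u.2 = 0 := by rw [h1] at h; rw [mul_comm]; omega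
    have hw1' : w.1 = 0 := by
      rcases mul_eq_zero.mp hw1 with h' | h'
      · exact h'
      · exact absurd h' h2
    simp only [toR, Prod.ext_iff, Prod.smul_fst, Prod.smul_snd, smul_eq_mul]
    constructor
    · rw [hw1', h1]; push_cast; ring
    · field_simp
  · refine ⟨(w.1 : ℝ) / (u.1 : ℝ), ?_⟩
    have h1' : (u.1 : ℝ) ≠ 0 := Int.cast_ne_zero.mpr h1
    simp only [toR, Prod.ext_iff, Prod.smul_fst, Prod.smul_snd, smul_eq_mul]
    constructor
    · field_simp
    · have : (u.1 : ℝ) * (w.2 : ℝ) = (u.2 : ℝ) * (w.1 : ℝ) := by exact_mod_cast h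
      field_simp
      linarith [this]

/-- Let `D₁`, `D₂` be corner perfect matchings of a non-degenerate
dimer model whose height changes are adjacent vertices of the characteristic polygon
in counter-clockwise order.  Then for any perfect matching `D₃` whose height change
does not lie on the segment joining `h(D₁)` and `h(D₂)`, the intersection pairing
satisfies `⟨[D₁ △ D₂], [D₂ △ D₃]⟩ > 0`. -/
theorem intersection_pairing_pos (G : DimerModel) (hG : G.NonDegenerate)
    (D₀ : Finset G.E) (hD₀ : G.IsMatching D₀)
    (D₁ D₂ : Finset G.E) (hadj : G.AdjacentCornersCCW D₀ D₁ D₂)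
    (D₃ : Finset G.E) (hD₃ : G.IsMatching D₃)
    (hseg : toR (G.height D₀ D₃) ∉
      segment ℝ (toR (G.height D₀ D₁)) (toR (G.height D₀ D₂))) :
    0 < zdet (G.relClass D₁ D₂) (G.relClass D₂ D₃) := by
  obtain ⟨⟨hm1, hext1⟩, ⟨hm2, hext2⟩, hne, hccw⟩ := hadj
  set h1 := G.height D₀ D₁ with hh1
  set h2 := G.height D₀ D₂ with hh2
  set h3 := G.height D₀ D₃ with hh3
  -- Reduce the pairing to a determinant of height differences.
  have e1 : G.relClass D₁ D₂ = rot h1 - rot h2 := by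
    rw [G.relClass_split D₀ D₁ D₂, G.rot_height, G.rot_height]
  have e2 : G.relClass D₂ D₃ = rot h2 - rot h3 := by
    rw [G.relClass_split D₀ D₂ D₃, G.rot_height, G.rot_height]
  have key : zdet (G.relClass D₁ D₂) (G.relClass D₂ D₃)
      = zdet (h2 - h1) (h3 - h1) := by
    rw [e1, e2]
    simp only [zdet, rot, Prod.fst_sub, Prod.snd_sub]
    ring
  rw [key]
  have hle : 0 ≤ zdet (h2 - h1) (h3 - h1) := hccw D₃ hD₃
  rcases hle.lt_or_eq with hlt | heq
  · exact hlt
  -- Otherwise `h3` is on the line through `h1` and `h2`: derive a contradiction.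
  exfalso
  have hune : h2 - h1 ≠ 0 := sub_ne_zero.mpr (Ne.symm hne)
  obtain ⟨t, ht⟩ := zdet_collinear hune heq.symm
  set A := toR h1 with hA
  set B := toR h2 with hB
  set C := toR h3 with hCdef
  have hC : C - A = t • (B - A) := by
    rw [hA, hB, hCdef, ← toR_sub, ← toR_sub]; exact ht
  have hC' : C = A + t • (B - A) := by
    rw [← hC]; abel
  have hmem : ∀ D : Finset G.E, G.IsMatching D →
      toR (G.height D₀ D) ∈ G.charPolygon D₀ := by
    intro D hD
    exact subset_convexHull ℝ _ ⟨G.height D₀ D, ⟨D, hD, rfl⟩, rfl⟩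
  have hAmem : A ∈ G.charPolygon D₀ := hmem D₁ hm1
  have hBmem : B ∈ G.charPolygon D₀ := hmem D₂ hm2
  have hCmem : C ∈ G.charPolygon D₀ := hmem D₃ hD₃
  have hABne : A ≠ B := fun h => hne (toR_inj h)
  rcases lt_or_ge t 0 with ht0 | ht0
  · -- `t < 0`: then `A` lies strictly between `C` and `B`, contradicting extremality.
    have hs0 : (0 : ℝ) < -t / (1 - t) := by
      apply div_pos (by linarith) (by linarith)
    have hs1 : -t / (1 - t) < 1 := by
      rw [div_lt_one (by linarith)]; linarith
    have hAop : A ∈ openSegment ℝ C B := by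
      rw [openSegment_eq_image']
      refine ⟨-t / (1 - t), ⟨hs0, hs1⟩, ?_⟩
      have h1t : (1 : ℝ) - t ≠ 0 := by linarith
      rw [hC']
      have hBC : B - (A + t • (B - A)) = (1 - t) • (B - A) := by
        rw [sub_smul, one_smul]; abel
      rw [hBC]
      simp only [smul_smul]
      rw [div_mul_cancel₀ _ h1t, neg_smul]; abel
    obtain ⟨_, hx⟩ := mem_extremePoints.mp hext1
    have := hx C hCmem B hBmem hAop
    exact hABne this.2.symm
  rcases le_or_gt t 1 with ht1 | ht1
  · -- `0 ≤ t ≤ 1`: then `C` is on the segment, contradicting `hseg`.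
    apply hseg
    rw [segment_eq_image']
    exact ⟨t, ⟨ht0, ht1⟩, hC'.symm⟩
  · -- `t > 1`: then `B` lies strictly between `A` and `C`, contradicting extremality.
    have htne : t ≠ 0 := by linarith
    have hBop : B ∈ openSegment ℝ A C := by
      rw [openSegment_eq_image']
      refine ⟨1 / t, ⟨by positivity, by rw [div_lt_one (by linarith)]; linarith⟩, ?_⟩
      rw [hC']
      have hCA : A + t • (B - A) - A = t • (B - A) := by abel
      rw [hCA]
      simp only [smul_smul]
      rw [one_div, inv_mul_cancel₀ htne, one_smul]
      abel
    obtain ⟨_, hx⟩ := mem_extremePoints.mp hext2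
    have := hx A hAmem C hCmem hBop
    exact hABne this.1
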